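/- Let U ⊆ ℂ be open, let φ : U → ℂ be holomorphic with φ′(z) ≠ 0 for all z ∈ U, and let u : ℝ² × ℝ → ℝ be a positive twice continuously differentiable function satisfying u_{tt} = (ln u)_{xx} + (ln u)_{yy} everywhere on ℝ² × ℝ. Define ũ on U × ℝ by ũ(z, t) := u(Re φ(z), Im φ(z), t) · |φ′(z)|². Then ũ is positive and satisfies ũ_{tt} = (ln ũ)_{xx} + (ln ũ)_{yy} at every point of U × ℝ, where x, y denote the real and imaginary parts of z. -/

import Mathlib

/-!
Near each point of `U`, `log ũ = (log u) ∘ φ + 2 log ‖φ'‖`, and `log ‖φ'‖` is harmonic. The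
Laplacian is conformally covariant, `Δ (g ∘ φ) = ‖φ'‖² (Δ g) ∘ φ`: along the directions `1` and `I`
the first-order terms `Dg (φ'')` and `Dg (I² φ'')` cancel, while the Hessian terms add up to
`D²g (c, c) + D²g (c I, c I) = ‖c‖² Δ g` with `c = φ'`. As the conformal factor does not depend on
time, `ũ_tt = ‖φ'‖² u_tt ∘ φ = ‖φ'‖² Δ (log u) ∘ φ = Δ (log ũ)`.
-/

open Complex Filter Topology InnerProductSpace Laplacian

section SecondDerivative

variable {E F : Type*} [NormedAddCommGroup E] [NormedSpace ℝ E]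
  [NormedAddCommGroup F] [NormedSpace ℝ F]

theorem deriv_deriv_comp_of_hasDerivAt {G : E → F} {γ w : ℝ → E} {s₀ : ℝ} {w' : E}
    (hG : ContDiffAt ℝ 2 G (γ s₀)) (hγ : ∀ᶠ s in 𝓝 s₀, HasDerivAt γ (w s) s)
    (hw : HasDerivAt w w' s₀) :
    deriv (deriv fun s => G (γ s)) s₀ =
      fderiv ℝ (fderiv ℝ G) (γ s₀) (w s₀) (w s₀) + fderiv ℝ G (γ s₀) w' := by
  have hγc : ContinuousAt γ s₀ := hγ.self_of_nhds.continuousAt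
  have hG_near : ∀ᶠ s in 𝓝 s₀, DifferentiableAt ℝ G (γ s) :=
    hγc.eventually ((hG.eventually (by simp)).mono fun _ h => h.differentiableAt two_ne_zero)
  have hderiv : deriv (fun s => G (γ s)) =ᶠ[𝓝 s₀] fun s => fderiv ℝ G (γ s) (w s) := by
    filter_upwards [hγ, hG_near] with s hs hGs
    exact (hGs.hasFDerivAt.comp_hasDerivAt s hs).deriv
  have hG' : DifferentiableAt ℝ (fderiv ℝ G) (γ s₀) :=
    (hG.fderiv_right (m := 1) le_rfl).differentiableAt one_ne_zero
  rw [hderiv.deriv_eq]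
  exact ((hG'.hasFDerivAt.comp_hasDerivAt s₀ hγ.self_of_nhds).clm_apply hw).deriv

theorem fderiv_fderiv_apply_eq_deriv_deriv {G : E → F} {a v : E} (hG : ContDiffAt ℝ 2 G a) :
    fderiv ℝ (fderiv ℝ G) a v v = deriv (deriv fun s : ℝ => G (a + s • v)) 0 := by
  have hline : ∀ s : ℝ, HasDerivAt (fun s : ℝ => a + s • v) v s := fun s => by
    simpa using ((hasDerivAt_id s).smul_const v).const_add a
  have := deriv_deriv_comp_of_hasDerivAt (γ := fun s : ℝ => a + s • v) (s₀ := 0)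
    (by simpa using hG) (.of_forall hline) (hasDerivAt_const 0 v)
  simpa using this.symm

end SecondDerivative

theorem Complex.hasDerivAt_mk_re (x y : ℝ) : HasDerivAt (fun s : ℝ => (⟨s, y⟩ : ℂ)) 1 x := by
  have : (fun s : ℝ => (⟨s, y⟩ : ℂ)) = fun s : ℝ => (s : ℂ) + y * I := by
    funext s; apply Complex.ext <;> simp
  rw [this]
  exact (ofRealCLM.hasDerivAt).add_const _

theorem Complex.hasDerivAt_mk_im (x y : ℝ) : HasDerivAt (fun s : ℝ => (⟨x, s⟩ : ℂ)) I y := by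
  have : (fun s : ℝ => (⟨x, s⟩ : ℂ)) = fun s : ℝ => x + s • I := by
    funext s; apply Complex.ext <;> simp
  rw [this]
  simpa using ((hasDerivAt_id y).smul_const I).const_add (x : ℂ)

section ComplexPlane

variable {F : Type*} [NormedAddCommGroup F] [NormedSpace ℝ F]

theorem Complex.laplacian_eq_deriv_deriv_add_deriv_deriv {f : ℂ → F} {x y : ℝ}
    (hf : ContDiffAt ℝ 2 f ⟨x, y⟩) :
    Δ f ⟨x, y⟩ = deriv (deriv fun x' => f ⟨x', y⟩) x + deriv (deriv fun y' => f ⟨x, y'⟩) y := by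
  simp only [laplacian_eq_iteratedFDeriv_complexPlane, iteratedFDeriv_two_apply]
  rw [deriv_deriv_comp_of_hasDerivAt (γ := fun s : ℝ => (⟨s, y⟩ : ℂ)) hf
      (.of_forall (hasDerivAt_mk_re · y)) (hasDerivAt_const x 1),
    deriv_deriv_comp_of_hasDerivAt (γ := fun s : ℝ => (⟨x, s⟩ : ℂ)) hf
      (.of_forall (hasDerivAt_mk_im x)) (hasDerivAt_const y I)]
  simp

theorem fderiv_fderiv_comp_apply_of_analyticAt {g : ℂ → F} {h : ℂ → ℂ} {z : ℂ} (v : ℂ)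
    (hg : ContDiffAt ℝ 2 g (h z)) (hh : AnalyticAt ℂ h z) :
    fderiv ℝ (fderiv ℝ (g ∘ h)) z v v =
      fderiv ℝ (fderiv ℝ g) (h z) (deriv h z * v) (deriv h z * v) +
        fderiv ℝ g (h z) (deriv (deriv h) z * v * v) := by
  rw [fderiv_fderiv_apply_eq_deriv_deriv (hg.comp z (hh.contDiffAt.restrict_scalars ℝ))]
  have hline : ∀ s : ℝ, HasDerivAt (fun s : ℝ => z + s • v) v s := fun s => by
    simpa using ((hasDerivAt_id s).smul_const v).const_add z
  have hh_near : ∀ᶠ s : ℝ in 𝓝 0, AnalyticAt ℂ h (z + s • v) :=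
    (hline 0).continuousAt.eventually (by simpa using hh.eventually_analyticAt)
  have hcurve : ∀ᶠ s : ℝ in 𝓝 0,
      HasDerivAt (fun s : ℝ => h (z + s • v)) (deriv h (z + s • v) * v) s :=
    hh_near.mono fun s hs => hs.differentiableAt.hasDerivAt.comp s (hline s)
  have hvelocity : HasDerivAt (fun s : ℝ => deriv h (z + s • v) * v)
      (deriv (deriv h) z * v * v) 0 := by
    have hd : HasDerivAt (deriv h) (deriv (deriv h) z) (z + (0 : ℝ) • v) := by
      simpa using hh.deriv.differentiableAt.hasDerivAt
    simpa [mul_assoc] using (hd.comp 0 (hline 0)).mul_const v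
  simpa using deriv_deriv_comp_of_hasDerivAt (by simpa using hg) hcurve hvelocity

theorem ContinuousLinearMap.apply_apply_add_apply_mul_I_apply_mul_I (B : ℂ →L[ℝ] ℂ →L[ℝ] F)
    (c : ℂ) : B c c + B (c * I) (c * I) = ‖c‖ ^ 2 • (B 1 1 + B I I) := by
  obtain ⟨p, q⟩ := c
  have hc : (⟨p, q⟩ : ℂ) = p • (1 : ℂ) + q • I := by apply Complex.ext <;> simp
  have hcI : (⟨p, q⟩ : ℂ) * I = (-q) • (1 : ℂ) + p • I := by apply Complex.ext <;> simp
  rw [Complex.sq_norm, Complex.normSq_mk, hcI, hc]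
  simp only [map_add, map_smul, add_apply, smul_apply]
  module

theorem laplacian_comp_of_analyticAt {g : ℂ → F} {h : ℂ → ℂ} {z : ℂ}
    (hg : ContDiffAt ℝ 2 g (h z)) (hh : AnalyticAt ℂ h z) :
    Δ (g ∘ h) z = ‖deriv h z‖ ^ 2 • Δ g (h z) := by
  simp only [laplacian_eq_iteratedFDeriv_complexPlane, iteratedFDeriv_two_apply,
    Matrix.cons_val_zero, Matrix.cons_val_one]
  rw [fderiv_fderiv_comp_apply_of_analyticAt 1 hg hh,
    fderiv_fderiv_comp_apply_of_analyticAt I hg hh,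
    ← ContinuousLinearMap.apply_apply_add_apply_mul_I_apply_mul_I]
  have hI : deriv (deriv h) z * I * I = -(deriv (deriv h) z * 1 * 1) := by
    rw [mul_assoc, I_mul_I]; ring
  rw [hI, map_neg, mul_one]
  abel

end ComplexPlane

/-- Conformal-change symmetry of the surface hyperbolic geometric flow equation
`u_tt = (ln u)_xx + (ln u)_yy`: if `φ` is holomorphic on an open `U ⊆ ℂ` with
nonvanishing derivative and `u` is a positive solution, then
`ũ(z,t) = u(Re φ(z), Im φ(z), t) · |φ'(z)|²` is a positive solution on `U × ℝ`. -/
theorem hyperbolic_flow_conformal_symmetry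
    (U : Set ℂ) (hU : IsOpen U) (φ : ℂ → ℂ)
    (hφ : DifferentiableOn ℂ φ U)
    (hφ' : ∀ z ∈ U, deriv φ z ≠ 0)
    (u : ℝ → ℝ → ℝ → ℝ)
    (hu_pos : ∀ x y t : ℝ, 0 < u x y t)
    (hu_smooth : ContDiff ℝ 2 (fun p : ℝ × ℝ × ℝ => u p.1 p.2.1 p.2.2))
    (hu_pde : ∀ x y t : ℝ,
      deriv (deriv (fun t' => u x y t')) t =
        deriv (deriv (fun x' => Real.log (u x' y t))) x +
        deriv (deriv (fun y' => Real.log (u x y' t))) y)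
    (v : ℝ → ℝ → ℝ → ℝ)
    (hv : v = fun x y t =>
      u (φ ⟨x, y⟩).re (φ ⟨x, y⟩).im t * ‖deriv φ ⟨x, y⟩‖ ^ 2) :
    ∀ x y t : ℝ, (⟨x, y⟩ : ℂ) ∈ U →
      0 < v x y t ∧
      deriv (deriv (fun t' => v x y t')) t =
        deriv (deriv (fun x' => Real.log (v x' y t))) x +
        deriv (deriv (fun y' => Real.log (v x y' t))) y := by
  subst hv
  intro x y t hz
  have hφz : AnalyticAt ℂ φ ⟨x, y⟩ := hφ.analyticAt (hU.mem_nhds hz)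
  have hφ'z := hφ' _ hz
  refine ⟨mul_pos (hu_pos _ _ _) (by positivity), ?_⟩
  set g : ℂ → ℝ := fun w => Real.log (u w.re w.im t)
  have hg : ContDiff ℝ 2 g :=
    (hu_smooth.comp (reCLM.contDiff.prodMk (imCLM.contDiff.prodMk contDiff_const))).log
      fun w => (hu_pos _ _ _).ne'
  have hharm : HarmonicAt ((2 : ℝ) • fun w => Real.log ‖deriv φ w‖) ⟨x, y⟩ :=
    (hφz.deriv.harmonicAt_log_norm hφ'z).const_smul
  have hsplit : (fun w => Real.log (u (φ w).re (φ w).im t * ‖deriv φ w‖ ^ 2)) =ᶠ[𝓝 ⟨x, y⟩]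
      g ∘ φ + (2 : ℝ) • fun w => Real.log ‖deriv φ w‖ := by
    filter_upwards [hφz.deriv.continuousAt.eventually_ne hφ'z] with w hw
    simp [g, Real.log_mul (hu_pos _ _ _).ne' (pow_ne_zero 2 (norm_ne_zero_iff.mpr hw))]
  have hsmooth : ContDiffAt ℝ 2 (g ∘ φ) ⟨x, y⟩ :=
    hg.contDiffAt.comp _ (hφz.contDiffAt.restrict_scalars ℝ)
  have hlaplacian : Δ (fun w => Real.log (u (φ w).re (φ w).im t * ‖deriv φ w‖ ^ 2)) ⟨x, y⟩ =
      ‖deriv φ ⟨x, y⟩‖ ^ 2 * Δ g (φ ⟨x, y⟩) := by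
    rw [(laplacian_congr_nhds hsplit).self_of_nhds, hsmooth.laplacian_add hharm.1,
      laplacian_comp_of_analyticAt hg.contDiffAt hφz, hharm.2.self_of_nhds, Pi.zero_apply,
      add_zero, smul_eq_mul]
  rw [← Complex.laplacian_eq_deriv_deriv_add_deriv_deriv
      ((hsmooth.add hharm.1).congr_of_eventuallyEq hsplit), hlaplacian,
    Complex.laplacian_eq_deriv_deriv_add_deriv_deriv hg.contDiffAt]
  simp only [deriv_mul_const_field', hu_pde]
  exact mul_comm _ _
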